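/- Let l, r ≥ 1 be integers, A = (a_{ij}) an l×r matrix of positive real numbers, x = (x_1, …, x_r) ∈ ℝ_{>0}^r, and χ = (χ_1, …, χ_r) ∈ ℂ^r with |χ_j| ≤ 1 for all j. Then for every s ∈ ℂ with Re(s) > r/l, Shintani's multiple zeta series converges absolutely; i.e., the family ((∏_{j=1}^r χ_j^{m_j}) · ∏_{i=1}^l (∑_{j=1}^r a_{ij}(m_j + x_j))^{−s})_{m ∈ (ℤ_{≥0})^r} is summable in norm. -/

import Mathlib

/-!
Write `w_i(m) = ∑_j a_ij (m_j + x_j)` and `σ = Re s`. With `b > 0` below every `a_ij · min(x_j, 1)`,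
each `w_i(m)` dominates every `b (m_j + 1)`, hence also their geometric mean, so
`w_i(m)^(-σ) ≤ ∏_j (b (m_j + 1))^(-σ/r)`. Multiplying over `i` and using `|χ_j| ≤ 1`, the `m`-th
term is at most `∏_j (b (m_j + 1))^(-lσ/r)`, a product of `r` copies of a convergent `p`-series
because `lσ/r > 1`.
-/

open Finset Filter Topology

theorem summable_prod_comp_fin_of_nonneg {β : Type*} {f : β → ℝ} (hf0 : 0 ≤ f)
    (hf : Summable f) : ∀ n : ℕ, Summable fun m : Fin n → β => ∏ j, f (m j)
  | 0 => .of_finite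
  | n + 1 => by
    have hprod := hf.mul_of_nonneg (summable_prod_comp_fin_of_nonneg hf0 hf n) hf0
      fun m => prod_nonneg fun j _ => hf0 (m j)
    refine (hprod.comp_injective (Fin.consEquiv fun _ => β).symm.injective).congr fun m => ?_
    simp [Fin.prod_univ_succ, Fin.consEquiv, Fin.tail]

section

variable {ι κ : Type*} [Fintype ι] [Fintype κ]

theorem summable_prod_comp_of_nonneg {β : Type*} {f : β → ℝ} (hf0 : 0 ≤ f)
    (hf : Summable f) : Summable fun m : κ → β => ∏ j, f (m j) := by
  let e := Fintype.equivFin κ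
  refine ((summable_prod_comp_fin_of_nonneg hf0 hf _).comp_injective
    (e.arrowCongr (Equiv.refl β)).injective).congr fun m => ?_
  exact (Fintype.prod_equiv e _ _ fun j => by simp).symm

theorem summable_mul_nat_add_one_rpow_neg {b p : ℝ} (hb : 0 < b) (hp : 1 < p) :
    Summable fun n : ℕ => (b * (n + 1)) ^ (-p) := by
  have hshift := ((Real.summable_nat_rpow.2 (neg_lt_neg hp)).comp_injective
    (add_left_injective 1)).mul_left (b ^ (-p))
  refine hshift.congr fun n => ?_
  simp [Real.mul_rpow hb.le (by positivity : (0:ℝ) ≤ n + 1)]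

theorem exists_pos_forall_le {α : Type*} [Finite α] {c : α → ℝ} (hc : ∀ a, 0 < c a) :
    ∃ b, 0 < b ∧ ∀ a, b ≤ c a :=
  ((eventually_mem_nhdsWithin (a := (0:ℝ)) (s := Set.Ioi 0)).and
    (nhdsWithin_le_nhds (eventually_all.2 fun a => eventually_le_nhds (hc a)))).exists

theorem mul_add_one_le_mul_add {a x b m : ℝ} (ha : 0 ≤ a) (hm : 0 ≤ m)
    (hb : b ≤ a * min x 1) : b * (m + 1) ≤ a * (m + x) := by
  have hmin : min x 1 * (m + 1) ≤ m + x := by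
    nlinarith [min_le_left x 1, min_le_right x 1]
  calc b * (m + 1) ≤ a * min x 1 * (m + 1) := by gcongr
    _ ≤ a * (m + x) := by rw [mul_assoc]; gcongr

theorem rpow_neg_le_prod_rpow_neg_div_card [Nonempty κ] {w t : ℝ}
    {z : κ → ℝ} (hz : ∀ j, 0 < z j) (hzw : ∀ j, z j ≤ w) (ht : 0 ≤ t) :
    w ^ (-t) ≤ ∏ j, z j ^ (-t / Fintype.card κ) := by
  have hw : 0 < w := (hz (Classical.arbitrary κ)).trans_le (hzw _)
  calc w ^ (-t) = ∏ _j : κ, w ^ (-t / Fintype.card κ) := by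
        rw [prod_const, card_univ, ← Real.rpow_natCast, ← Real.rpow_mul hw.le,
          div_mul_cancel₀ _ (by positivity)]
    _ ≤ ∏ j, z j ^ (-t / Fintype.card κ) := by
        refine prod_le_prod (fun j _ => by positivity) fun j _ =>
          Real.rpow_le_rpow_of_nonpos (hz j) (hzw j) ?_
        exact div_nonpos_of_nonpos_of_nonneg (neg_nonpos.2 ht) (Nat.cast_nonneg _)

theorem norm_exp_neg_mul_log (s : ℂ) {w : ℝ} (hw : 0 < w) :
    ‖Complex.exp (-s * (Real.log w : ℂ))‖ = w ^ (-s.re) := by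
  rw [Complex.norm_exp, Real.rpow_def_of_pos hw]
  simp [Complex.mul_re, mul_comm]

theorem norm_prod_pow_le_one {χ : κ → ℂ} (hχ : ∀ j, ‖χ j‖ ≤ 1) (m : κ → ℕ) :
    ‖∏ j, χ j ^ m j‖ ≤ 1 := by
  rw [norm_prod]
  exact prod_le_one (fun j _ => norm_nonneg _) fun j _ => by
    rw [norm_pow]; exact pow_le_one₀ (norm_nonneg _) (hχ j)

theorem mul_add_one_le_sum_mul_add {a x : κ → ℝ} (ha : ∀ j, 0 ≤ a j) {b : ℝ} (hb0 : 0 < b)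
    (hb : ∀ j, b ≤ a j * min (x j) 1) (m : κ → ℕ) (j : κ) :
    b * (m j + 1) ≤ ∑ k, a k * (m k + x k) := by
  have hterm (k : κ) : b * (m k + 1) ≤ a k * (m k + x k) :=
    mul_add_one_le_mul_add (ha k) (Nat.cast_nonneg _) (hb k)
  exact (hterm j).trans <|
    single_le_sum (fun k _ => (by positivity : (0:ℝ) ≤ _).trans (hterm k)) (mem_univ j)

theorem sum_mul_add_rpow_neg_le [Nonempty κ] {a x : κ → ℝ} (ha : ∀ j, 0 ≤ a j) {b t : ℝ}
    (hb0 : 0 < b) (hb : ∀ j, b ≤ a j * min (x j) 1) (ht : 0 ≤ t) (m : κ → ℕ) :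
    (∑ j, a j * (m j + x j)) ^ (-t) ≤ ∏ j, (b * (m j + 1)) ^ (-t / Fintype.card κ) :=
  rpow_neg_le_prod_rpow_neg_div_card (fun j => by positivity)
    (mul_add_one_le_sum_mul_add ha hb0 hb m) ht

theorem norm_shintani_term_le [Nonempty κ] {A : ι → κ → ℝ} (hA : ∀ i j, 0 ≤ A i j) (x : κ → ℝ)
    {χ : κ → ℂ} (hχ : ∀ j, ‖χ j‖ ≤ 1) {s : ℂ} (hs : 0 ≤ s.re) {b : ℝ} (hb0 : 0 < b)
    (hb : ∀ i j, b ≤ A i j * min (x j) 1) (m : κ → ℕ) :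
    ‖(∏ j, χ j ^ m j) *
        ∏ i, Complex.exp (-s * (Real.log (∑ j, A i j * ((m j : ℝ) + x j)) : ℂ))‖ ≤
      ∏ j, (b * (m j + 1)) ^ (-(Fintype.card ι * s.re / Fintype.card κ)) := by
  have hpos (i : ι) : 0 < ∑ j, A i j * ((m j : ℝ) + x j) :=
    have j := Classical.arbitrary κ
    (by positivity : 0 < b * (m j + 1)).trans_le (mul_add_one_le_sum_mul_add (hA i) hb0 (hb i) m j)
  rw [norm_mul]
  calc _ ≤ 1 * ‖∏ i, Complex.exp (-s * (Real.log (∑ j, A i j * ((m j : ℝ) + x j)) : ℂ))‖ :=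
        mul_le_mul_of_nonneg_right (norm_prod_pow_le_one hχ m) (by positivity)
    _ = ∏ i, (∑ j, A i j * ((m j : ℝ) + x j)) ^ (-s.re) := by
        rw [one_mul, norm_prod]
        exact prod_congr rfl fun i _ => norm_exp_neg_mul_log s (hpos i)
    _ ≤ ∏ i, ∏ j, (b * (m j + 1)) ^ (-s.re / Fintype.card κ) :=
        Finset.prod_le_prod (fun i _ => Real.rpow_nonneg (hpos i).le _)
          fun i _ => sum_mul_add_rpow_neg_le (hA i) hb0 (hb i) hs m
    _ = ∏ j, (b * (m j + 1)) ^ (-(Fintype.card ι * s.re / Fintype.card κ)) := by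
        rw [Finset.prod_comm]
        refine prod_congr rfl fun j _ => ?_
        rw [prod_const, card_univ, ← Real.rpow_natCast, ← Real.rpow_mul (by positivity)]
        ring_nf

end

/-- Shintani's multiple zeta series
`ζ(s, A, x, χ) = ∑_{m ∈ ℤ_{≥0}^r} (∏_j χ_j^{m_j}) ∏_{i=1}^l (∑_j a_{ij}(m_j+x_j))^{-s}`
(with `w^{-s} := exp(-s log w)`) converges absolutely for `Re s > r/l`. -/
theorem shintani_zeta_summable (l r : ℕ) (hl : 1 ≤ l) (hr : 1 ≤ r)
    (A : Fin l → Fin r → ℝ) (hA : ∀ i j, 0 < A i j)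
    (x : Fin r → ℝ) (hx : ∀ j, 0 < x j)
    (χ : Fin r → ℂ) (hχ : ∀ j, ‖χ j‖ ≤ 1)
    (s : ℂ) (hs : (r : ℝ) / (l : ℝ) < s.re) :
    Summable (fun m : Fin r → ℕ =>
      ‖(∏ j, χ j ^ m j) *
        ∏ i, Complex.exp (-s * (Real.log (∑ j, A i j * ((m j : ℝ) + x j)) : ℂ))‖) := by
  have : Nonempty (Fin r) := Fin.pos_iff_nonempty.mp hr
  obtain ⟨b, hb0, hb⟩ :=
    exists_pos_forall_le (c := fun p : Fin l × Fin r => A p.1 p.2 * min (x p.2) 1) fun p =>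
      mul_pos (hA _ _) (lt_min (hx _) one_pos)
  have hs0 : 0 ≤ s.re := (by positivity : (0:ℝ) ≤ r / l).trans hs.le
  have hp : 1 < Fintype.card (Fin l) * s.re / Fintype.card (Fin r) := by
    rw [Fintype.card_fin, Fintype.card_fin, one_lt_div (by positivity), mul_comm,
      ← div_lt_iff₀ (by positivity)]
    exact hs
  have hbound := norm_shintani_term_le (fun i j => (hA i j).le) x hχ hs0 hb0 fun i j => hb (i, j)
  exact .of_nonneg_of_le (fun m => norm_nonneg _) hbound <|
    summable_prod_comp_of_nonneg (f := fun n : ℕ => (b * (n + 1)) ^ _)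
      (fun n => by positivity) (summable_mul_nat_add_one_rpow_neg hb0 hp)
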